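/- Soundness of a logical relation for termination-observation equivalence in F: if two closed terms of type int are related by a step-indexed logical relation at all step indices, then plugging them into any well-typed closing context yields programs that co-terminate; hence logical relatedness implies contextual equivalence. -/

import Mathlib

/-! Core formalization of the functional language F from "FunTAL: Reasonably
Mixing a Functional Language with Assembly": simply-typed call-by-value
language with unit, integers, arithmetic primitives, test-if-zero,
functions, iso-recursive types (fold/unfold) and tuples with projection.
De Bruijn indices are used for term and type variables. -/

namespace FunTAL

/-- F types. `mu` binds type variable 0 (de Bruijn). -/
inductive Ty : Type
  | tvar : ℕ → Ty
  | unit : Ty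
  | int : Ty
  | arrow : Ty → Ty → Ty
  | mu : Ty → Ty
  | prod : List Ty → Ty

-- Substitution of a (closed) type `u` for type variable `k`.
mutual
def substTy (u : Ty) : ℕ → Ty → Ty
  | k, .tvar n => if n = k then u else if k < n then .tvar (n-1) else .tvar n
  | _, .unit => .unit
  | _, .int => .int
  | k, .arrow t1 t2 => .arrow (substTy u k t1) (substTy u k t2)
  | k, .mu t => .mu (substTy u (k+1) t)
  | k, .prod ts => .prod (substTyList u k ts)
def substTyList (u : Ty) : ℕ → List Ty → List Ty
  | _, [] => []
  | k, t :: ts => substTy u k t :: substTyList u k ts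
end

/-- Arithmetic primitives. -/
inductive Prim : Type
  | add | sub | mul
deriving DecidableEq

def Prim.denote : Prim → ℤ → ℤ → ℤ
  | .add, a, b => a + b
  | .sub, a, b => a - b
  | .mul, a, b => a * b

/-- F expressions (de Bruijn indices for term variables). -/
inductive Exp : Type
  | var : ℕ → Exp
  | unit : Exp
  | int : ℤ → Exp
  | prim : Prim → Exp → Exp → Exp
  | if0 : Exp → Exp → Exp → Exp
  | lam : Ty → Exp → Exp
  | app : Exp → Exp → Exp
  | fold : Ty → Exp → Exp
  | unfold : Exp → Exp
  | tuple : List Exp → Exp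
  | proj : ℕ → Exp → Exp

/-- Values: unit, integers, lambdas, fold of a value, tuples of values. -/
inductive Value : Exp → Prop
  | unit : Value .unit
  | int : ∀ n, Value (.int n)
  | lam : ∀ τ b, Value (.lam τ b)
  | fold : ∀ τ v, Value v → Value (.fold τ v)
  | tuple : ∀ vs, (∀ v ∈ vs, Value v) → Value (.tuple vs)

-- Capture-avoiding substitution of a closed value `u` for variable `k`.
mutual
def subst (u : Exp) : ℕ → Exp → Exp
  | k, .var n => if n = k then u else if k < n then .var (n-1) else .var n
  | _, .unit => .unit
  | _, .int n => .int n
  | k, .prim p e1 e2 => .prim p (subst u k e1) (subst u k e2)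
  | k, .if0 e e1 e2 => .if0 (subst u k e) (subst u k e1) (subst u k e2)
  | k, .lam τ b => .lam τ (subst u (k+1) b)
  | k, .app e1 e2 => .app (subst u k e1) (subst u k e2)
  | k, .fold τ e => .fold τ (subst u k e)
  | k, .unfold e => .unfold (subst u k e)
  | k, .tuple es => .tuple (substList u k es)
  | k, .proj i e => .proj i (subst u k e)
def substList (u : Exp) : ℕ → List Exp → List Exp
  | _, [] => []
  | k, e :: es => subst u k e :: substList u k es
end

-- The typing judgment Γ ⊢ e : τ.
mutual
inductive HasType : List Ty → Exp → Ty → Prop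
  | var : ∀ {Γ n τ}, Γ[n]? = some τ → HasType Γ (.var n) τ
  | unit : ∀ {Γ}, HasType Γ .unit .unit
  | int : ∀ {Γ n}, HasType Γ (.int n) .int
  | prim : ∀ {Γ p e1 e2}, HasType Γ e1 .int → HasType Γ e2 .int →
      HasType Γ (.prim p e1 e2) .int
  | if0 : ∀ {Γ e e1 e2 τ}, HasType Γ e .int → HasType Γ e1 τ → HasType Γ e2 τ →
      HasType Γ (.if0 e e1 e2) τ
  | lam : ∀ {Γ τ1 b τ2}, HasType (τ1 :: Γ) b τ2 →
      HasType Γ (.lam τ1 b) (.arrow τ1 τ2)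
  | app : ∀ {Γ e1 e2 τ1 τ2}, HasType Γ e1 (.arrow τ1 τ2) → HasType Γ e2 τ1 →
      HasType Γ (.app e1 e2) τ2
  | fold : ∀ {Γ e τ}, HasType Γ e (substTy (.mu τ) 0 τ) →
      HasType Γ (.fold (.mu τ) e) (.mu τ)
  | unfold : ∀ {Γ e τ}, HasType Γ e (.mu τ) →
      HasType Γ (.unfold e) (substTy (.mu τ) 0 τ)
  | tuple : ∀ {Γ es τs}, HasTypeList Γ es τs → HasType Γ (.tuple es) (.prod τs)
  | proj : ∀ {Γ e τs i τ}, HasType Γ e (.prod τs) → τs[i]? = some τ →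
      HasType Γ (.proj i e) τ
inductive HasTypeList : List Ty → List Exp → List Ty → Prop
  | nil : ∀ {Γ}, HasTypeList Γ [] []
  | cons : ∀ {Γ e τ es τs}, HasType Γ e τ → HasTypeList Γ es τs →
      HasTypeList Γ (e :: es) (τ :: τs)
end

/-- Evaluation contexts enforcing left-to-right call-by-value evaluation. -/
inductive ECtx : Type
  | hole : ECtx
  | prim1 : Prim → ECtx → Exp → ECtx
  | prim2 : Prim → ∀ v : Exp, Value v → ECtx → ECtx
  | if0C : ECtx → Exp → Exp → ECtx
  | app1 : ECtx → Exp → ECtx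
  | app2 : ∀ v : Exp, Value v → ECtx → ECtx
  | foldC : Ty → ECtx → ECtx
  | unfoldC : ECtx → ECtx
  | tupleC : ∀ vs : List Exp, (∀ v ∈ vs, Value v) → ECtx → List Exp → ECtx
  | projC : ℕ → ECtx → ECtx

/-- Plugging an expression into an evaluation context. -/
def plug : ECtx → Exp → Exp
  | .hole, e => e
  | .prim1 p E e2, e => .prim p (plug E e) e2
  | .prim2 p v _ E, e => .prim p v (plug E e)
  | .if0C E e1 e2, e => .if0 (plug E e) e1 e2
  | .app1 E e2, e => .app (plug E e) e2
  | .app2 v _ E, e => .app v (plug E e)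
  | .foldC τ E, e => .fold τ (plug E e)
  | .unfoldC E, e => .unfold (plug E e)
  | .tupleC vs _ E es, e => .tuple (vs ++ plug E e :: es)
  | .projC i E, e => .proj i (plug E e)

/-- Primitive reduction steps (redex contractions). -/
inductive HeadStep : Exp → Exp → Prop
  | beta : ∀ τ b v, Value v → HeadStep (.app (.lam τ b) v) (subst v 0 b)
  | prim : ∀ p n1 n2, HeadStep (.prim p (.int n1) (.int n2)) (.int (p.denote n1 n2))
  | if0_true : ∀ e1 e2, HeadStep (.if0 (.int 0) e1 e2) e1
  | if0_false : ∀ n e1 e2, n ≠ 0 → HeadStep (.if0 (.int n) e1 e2) e2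
  | unfold_fold : ∀ τ v, Value v → HeadStep (.unfold (.fold τ v)) v
  | proj : ∀ vs i v, (∀ w ∈ vs, Value w) → vs[i]? = some v →
      HeadStep (.proj i (.tuple vs)) v

/-- A redex is an expression that can take a primitive reduction step. -/
def Redex (e : Exp) : Prop := ∃ e', HeadStep e e'

/-- The small-step call-by-value operational semantics: reduce a redex
inside an evaluation context. -/
inductive Step : Exp → Exp → Prop
  | mk : ∀ (E : ECtx) (r r' : Exp), HeadStep r r' → Step (plug E r) (plug E r')

/-- `e` reduces to `e'` in exactly `j` steps. -/
inductive StepN : ℕ → Exp → Exp → Prop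
  | refl : ∀ e, StepN 0 e e
  | step : ∀ {j e e' e''}, Step e e' → StepN j e' e'' → StepN (j+1) e e''

/-- Multi-step reduction. -/
def Steps : Exp → Exp → Prop := Relation.ReflTransGen Step

/-- `e` evaluates to the value `v`. -/
def Evaluates (e v : Exp) : Prop := Steps e v ∧ Value v

/-- The step-indexed logical relation at type `int`: equality of integer
results under termination, approximated to step index `k` — if `e1`
evaluates to an integer literal within `k` steps then `e2` evaluates to the
same integer literal. -/
def LRint (k : ℕ) (e1 e2 : Exp) : Prop :=
  ∀ j ≤ k, ∀ n : ℤ, StepN j e1 (.int n) → Steps e2 (.int n)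

/-!
Evaluation of `C[e₂]` can follow evaluation of `C[e₁]` up to the relation `Sim e₁ e₂`, the
compatible closure of `{(p, e₂) | e₁ →* p}`. A left step inside a reduct `p` of `e₁` is matched by
no step at all. A left redex that consumes `p` needs `p` to be a value, which by subject reduction
is an integer literal `n`; then `e₂ →* n`, because step-indexed relatedness at every index says
exactly that `e₁ →* n` implies `e₂ →* n` (`IntApprox`). Since `e₁` and `e₂` are closed, `Sim` is
stable under substituting related values, which handles β-reduction. So if `C[e₁]` reaches a
value, so does `C[e₂]`, and the symmetric hypothesis gives the converse.
-/

theorem _root_.List.Forall₂.exists_forall₂_forall₂ {α β γ : Type*} {R : α → β → Prop}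
    {S : β → γ → Prop} {T : α → γ → Prop} {l₁ : List α} {l₂ : List β} (h : List.Forall₂ R l₁ l₂)
    (H : ∀ a ∈ l₁, ∀ b, R a b → ∃ c, S b c ∧ T a c) :
    ∃ l₃, List.Forall₂ S l₂ l₃ ∧ List.Forall₂ T l₁ l₃ := by
  induction h with
  | nil => exact ⟨[], .nil, .nil⟩
  | @cons a b _ _ hab _ ih =>
    obtain ⟨c, hS, hT⟩ := H a List.mem_cons_self b hab
    obtain ⟨l₃, hS', hT'⟩ := ih fun a' ha' => H a' (List.mem_cons_of_mem a ha')
    exact ⟨c :: l₃, .cons hS hS', .cons hT hT'⟩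

theorem _root_.List.Forall₂.exists_of_getElem? {α β : Type*} {R : α → β → Prop} :
    ∀ {l₁ : List α} {l₂ : List β}, List.Forall₂ R l₁ l₂ →
      ∀ {i : ℕ} {a : α}, l₁[i]? = some a → ∃ b, l₂[i]? = some b ∧ R a b
  | _, _, .cons hab _, 0, _, ha => ⟨_, rfl, Option.some.inj ha ▸ hab⟩
  | _, _, .cons _ hs, _ + 1, _, ha => hs.exists_of_getElem? ha

theorem _root_.List.Forall₂.exists_of_append_cons {α β : Type*} {R : α → β → Prop} :
    ∀ {xs : List α} {y : α} {zs : List α} {l : List β}, List.Forall₂ R (xs ++ y :: zs) l →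
      ∃ l₁ b l₂, l = l₁ ++ b :: l₂ ∧ List.Forall₂ R xs l₁ ∧ R y b ∧ List.Forall₂ R zs l₂
  | [], _, _, _, .cons h hs => ⟨[], _, _, rfl, .nil, h, hs⟩
  | _ :: _, _, _, _, .cons h hs =>
    let ⟨l₁, b, l₂, hl, h₁, h₂, h₃⟩ := hs.exists_of_append_cons
    ⟨_ :: l₁, b, l₂, hl ▸ rfl, .cons h h₁, h₂, h₃⟩

theorem exists_stepN_of_steps {e e' : Exp} (h : Steps e e') : ∃ j, StepN j e e' := by
  induction h using Relation.ReflTransGen.head_induction_on with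
  | refl => exact ⟨0, .refl _⟩
  | head hstep _ ih =>
    obtain ⟨j, hj⟩ := ih
    exact ⟨j + 1, .step hstep hj⟩

theorem HeadStep.step {r r' : Exp} (h : HeadStep r r') : Step r r' :=
  .mk .hole r r' h

def ECtx.comp : ECtx → ECtx → ECtx
  | .hole, F => F
  | .prim1 p E e, F => .prim1 p (E.comp F) e
  | .prim2 p v hv E, F => .prim2 p v hv (E.comp F)
  | .if0C E a b, F => .if0C (E.comp F) a b
  | .app1 E e, F => .app1 (E.comp F) e
  | .app2 v hv E, F => .app2 v hv (E.comp F)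
  | .foldC τ E, F => .foldC τ (E.comp F)
  | .unfoldC E, F => .unfoldC (E.comp F)
  | .tupleC vs hvs E es, F => .tupleC vs hvs (E.comp F) es
  | .projC i E, F => .projC i (E.comp F)

theorem plug_comp (E F : ECtx) (e : Exp) : plug (E.comp F) e = plug E (plug F e) := by
  induction E <;> simp only [ECtx.comp, plug, *]

theorem Step.plug {e e' : Exp} (E : ECtx) : Step e e' → Step (plug E e) (plug E e')
  | .mk F r r' h => by
    rw [← plug_comp, ← plug_comp]
    exact .mk _ r r' h

theorem Steps.plug {e e' : Exp} (E : ECtx) (h : Steps e e') : Steps (plug E e) (plug E e') :=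
  Relation.ReflTransGen.lift (FunTAL.plug E) (fun _ _ => Step.plug E) _ _ h

theorem steps_tuple_of_forall₂ {cs ws : List Exp}
    (h : List.Forall₂ Evaluates cs ws) :
    ∀ {pre : List Exp}, (∀ v ∈ pre, Value v) → ∀ rest : List Exp,
      Steps (.tuple (pre ++ cs ++ rest)) (.tuple (pre ++ ws ++ rest)) := by
  induction h with
  | nil => exact fun _ _ => .refl
  | @cons c w cs ws hcw _ ih =>
    intro pre hpre rest
    have hc : Steps (.tuple (pre ++ c :: (cs ++ rest))) (.tuple (pre ++ w :: (cs ++ rest))) :=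
      hcw.1.plug (.tupleC pre hpre .hole _)
    have hcs := ih (pre := pre ++ [w]) (by simpa [or_imp, forall_and] using ⟨hpre, hcw.2⟩) rest
    simp only [List.append_assoc, List.cons_append] at hcs ⊢
    exact hc.trans hcs

theorem forall_value_of_forall₂_evaluates {cs ws : List Exp} (h : List.Forall₂ Evaluates cs ws) :
    ∀ w ∈ ws, Value w := by
  induction h with
  | nil => simp
  | cons hcw _ ih => simpa using ⟨hcw.2, ih⟩

mutual
theorem HasType.weaken (Δ : List Ty) : ∀ {Γ e τ}, HasType Γ e τ → HasType (Γ ++ Δ) e τ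
  | _, _, _, .var hn => .var (List.getElem?_append_left (List.getElem?_eq_some_iff.mp hn).1 ▸ hn)
  | _, _, _, .unit => .unit
  | _, _, _, .int => .int
  | _, _, _, .prim h₁ h₂ => .prim (h₁.weaken Δ) (h₂.weaken Δ)
  | _, _, _, .if0 h h₁ h₂ => .if0 (h.weaken Δ) (h₁.weaken Δ) (h₂.weaken Δ)
  | _, _, _, .lam h => .lam (h.weaken Δ)
  | _, _, _, .app h₁ h₂ => .app (h₁.weaken Δ) (h₂.weaken Δ)
  | _, _, _, .fold h => .fold (h.weaken Δ)
  | _, _, _, .unfold h => .unfold (h.weaken Δ)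
  | _, _, _, .tuple h => .tuple (HasTypeList.weaken Δ h)
  | _, _, _, .proj h hi => .proj (h.weaken Δ) hi
theorem HasTypeList.weaken (Δ : List Ty) :
    ∀ {Γ es τs}, HasTypeList Γ es τs → HasTypeList (Γ ++ Δ) es τs
  | _, _, _, .nil => .nil
  | _, _, _, .cons h hs => .cons (h.weaken Δ) (HasTypeList.weaken Δ hs)
end

mutual
theorem HasType.subst_eq_self (u : Exp) : ∀ {Γ e τ} {k : ℕ}, HasType Γ e τ → Γ.length ≤ k →
    subst u k e = e
  | _, .var n, _, k, .var hn, hk => by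
    have := (List.getElem?_eq_some_iff.mp hn).1
    simp only [subst, if_neg (show n ≠ k by omega), if_neg (show ¬k < n by omega)]
  | _, _, _, _, .unit, _ | _, _, _, _, .int, _ => rfl
  | _, _, _, _, .prim h₁ h₂, hk => by
    simp only [subst, h₁.subst_eq_self u hk, h₂.subst_eq_self u hk]
  | _, _, _, _, .if0 h h₁ h₂, hk => by
    simp only [subst, h.subst_eq_self u hk, h₁.subst_eq_self u hk, h₂.subst_eq_self u hk]
  | _, _, _, _, .lam h, hk => by
    simp only [subst, h.subst_eq_self u (Nat.succ_le_succ hk)]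
  | _, _, _, _, .app h₁ h₂, hk => by
    simp only [subst, h₁.subst_eq_self u hk, h₂.subst_eq_self u hk]
  | _, _, _, _, .fold h, hk | _, _, _, _, .unfold h, hk | _, _, _, _, .proj h _, hk => by
    simp only [subst, h.subst_eq_self u hk]
  | _, _, _, _, .tuple h, hk => by simp only [subst, HasTypeList.substList_eq_self u h hk]
theorem HasTypeList.substList_eq_self (u : Exp) :
    ∀ {Γ es τs} {k : ℕ}, HasTypeList Γ es τs → Γ.length ≤ k → substList u k es = es
  | _, _, _, _, .nil, _ => rfl
  | _, _, _, _, .cons h hs, hk => by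
    simp only [substList, h.subst_eq_self u hk, HasTypeList.substList_eq_self u hs hk]
end

mutual
theorem HasType.subst {u : Exp} {σ : Ty} (hu : HasType [] u σ) :
    ∀ {Γ e τ}, HasType (Γ ++ [σ]) e τ → HasType Γ (subst u Γ.length e) τ
  | Γ, .var n, τ, .var hn => by
    rcases Nat.lt_trichotomy n Γ.length with hlt | rfl | hgt
    · rw [List.getElem?_append_left hlt] at hn
      simpa only [FunTAL.subst, if_neg hlt.ne, if_neg hlt.not_gt] using HasType.var hn
    · obtain rfl : σ = τ := by simpa using hn
      simpa [FunTAL.subst] using hu.weaken Γ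
    · exact absurd (List.getElem?_eq_some_iff.mp hn).1 (by simp; omega)
  | _, _, _, .unit => .unit
  | _, _, _, .int => .int
  | _, _, _, .prim h₁ h₂ => .prim (hu.subst h₁) (hu.subst h₂)
  | _, _, _, .if0 h h₁ h₂ => .if0 (hu.subst h) (hu.subst h₁) (hu.subst h₂)
  | Γ, _, _, .lam (τ1 := τ₁) h => .lam (hu.subst (Γ := τ₁ :: Γ) h)
  | _, _, _, .app h₁ h₂ => .app (hu.subst h₁) (hu.subst h₂)
  | _, _, _, .fold h => .fold (hu.subst h)
  | _, _, _, .unfold h => .unfold (hu.subst h)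
  | _, _, _, .tuple h => .tuple (hu.substList h)
  | _, _, _, .proj h hi => .proj (hu.subst h) hi
theorem HasType.substList {u : Exp} {σ : Ty} (hu : HasType [] u σ) :
    ∀ {Γ es τs}, HasTypeList (Γ ++ [σ]) es τs → HasTypeList Γ (substList u Γ.length es) τs
  | _, _, _, .nil => .nil
  | _, _, _, .cons h hs => .cons (hu.subst h) (hu.substList hs)
end

theorem HasTypeList.hasType_of_getElem? : ∀ {Γ es τs}, HasTypeList Γ es τs →
    ∀ {i : ℕ} {e τ}, es[i]? = some e → τs[i]? = some τ → HasType Γ e τ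
  | _, _, _, .cons h _, 0, _, _, he, hτ => by
    obtain ⟨rfl, rfl⟩ : _ ∧ _ := ⟨Option.some.inj he, Option.some.inj hτ⟩
    exact h
  | _, _, _, .cons _ hs, _ + 1, _, _, he, hτ => hs.hasType_of_getElem? he hτ

theorem HasTypeList.replace {Γ : List Ty} {y y' : Exp}
    (hy : ∀ {σ}, HasType Γ y σ → HasType Γ y' σ) :
    ∀ (xs : List Exp) {zs τs}, HasTypeList Γ (xs ++ y :: zs) τs → HasTypeList Γ (xs ++ y' :: zs) τs
  | [], _, _, .cons h hs => .cons (hy h) hs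
  | _ :: xs, _, _, .cons h hs => .cons h (replace hy xs hs)

theorem HasType.replace_plug {Γ : List Ty} {r r' : Exp}
    (hr : ∀ {σ}, HasType Γ r σ → HasType Γ r' σ) :
    ∀ (E : ECtx) {τ}, HasType Γ (plug E r) τ → HasType Γ (plug E r') τ
  | .hole, _, h => hr h
  | .prim1 _ E _, _, .prim h₁ h₂ => .prim (replace_plug hr E h₁) h₂
  | .prim2 _ _ _ E, _, .prim h₁ h₂ => .prim h₁ (replace_plug hr E h₂)
  | .if0C E _ _, _, .if0 h h₁ h₂ => .if0 (replace_plug hr E h) h₁ h₂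
  | .app1 E _, _, .app h₁ h₂ => .app (replace_plug hr E h₁) h₂
  | .app2 _ _ E, _, .app h₁ h₂ => .app h₁ (replace_plug hr E h₂)
  | .foldC _ E, _, .fold h => .fold (replace_plug hr E h)
  | .unfoldC E, _, .unfold h => .unfold (replace_plug hr E h)
  | .tupleC vs _ E _, _, .tuple h => .tuple (h.replace (replace_plug hr E) vs)
  | .projC _ E, _, .proj h hi => .proj (replace_plug hr E h) hi

theorem HasType.headStep {r r' : Exp} {τ : Ty} (ht : HasType [] r τ) (h : HeadStep r r') :
    HasType [] r' τ := by
  cases h with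
  | beta => cases ht with | app hf hv => cases hf with | lam hb => exact hv.subst (Γ := []) hb
  | prim => cases ht; exact .int
  | if0_true => cases ht with | if0 _ h _ => exact h
  | if0_false => cases ht with | if0 _ _ h => exact h
  | unfold_fold => cases ht with | unfold h => cases h with | fold h => exact h
  | proj _ _ _ _ hi =>
    cases ht with | proj h hτ => cases h with | tuple h => exact h.hasType_of_getElem? hi hτ

theorem HasType.step {e e' : Exp} {τ : Ty} (ht : HasType [] e τ) : Step e e' → HasType [] e' τ
  | .mk E _ _ h => ht.replace_plug (·.headStep h) E

theorem HasType.steps {e e' : Exp} {τ : Ty} (ht : HasType [] e τ) (h : Steps e e') :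
    HasType [] e' τ := by
  induction h with
  | refl => exact ht
  | tail _ hs ih => exact ih.step hs

structure IntApprox (e₁ e₂ : Exp) : Prop where
  hasType_left : HasType [] e₁ .int
  hasType_right : HasType [] e₂ .int
  steps_int {n : ℤ} : Steps e₁ (.int n) → Steps e₂ (.int n)

theorem IntApprox.of_lrint {e₁ e₂ : Exp} (ht₁ : HasType [] e₁ .int) (ht₂ : HasType [] e₂ .int)
    (hrel : ∀ k, LRint k e₁ e₂) : IntApprox e₁ e₂ where
  hasType_left := ht₁
  hasType_right := ht₂
  steps_int h := by
    obtain ⟨j, hj⟩ := exists_stepN_of_steps h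
    exact hrel j j le_rfl _ hj

inductive Sim (e₁ e₂ : Exp) : Exp → Exp → Prop
  | base {p : Exp} : Steps e₁ p → Sim e₁ e₂ p e₂
  | var (n : ℕ) : Sim e₁ e₂ (.var n) (.var n)
  | unit : Sim e₁ e₂ .unit .unit
  | int (n : ℤ) : Sim e₁ e₂ (.int n) (.int n)
  | prim (p : Prim) {a a' b b' : Exp} : Sim e₁ e₂ a a' → Sim e₁ e₂ b b' →
      Sim e₁ e₂ (.prim p a b) (.prim p a' b')
  | if0 {c c' a a' b b' : Exp} : Sim e₁ e₂ c c' → Sim e₁ e₂ a a' → Sim e₁ e₂ b b' →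
      Sim e₁ e₂ (.if0 c a b) (.if0 c' a' b')
  | lam (τ : Ty) {b b' : Exp} : Sim e₁ e₂ b b' → Sim e₁ e₂ (.lam τ b) (.lam τ b')
  | app {a a' b b' : Exp} : Sim e₁ e₂ a a' → Sim e₁ e₂ b b' → Sim e₁ e₂ (.app a b) (.app a' b')
  | fold (τ : Ty) {a a' : Exp} : Sim e₁ e₂ a a' → Sim e₁ e₂ (.fold τ a) (.fold τ a')
  | unfold {a a' : Exp} : Sim e₁ e₂ a a' → Sim e₁ e₂ (.unfold a) (.unfold a')
  | tuple {es es' : List Exp} : List.Forall₂ (Sim e₁ e₂) es es' →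
      Sim e₁ e₂ (.tuple es) (.tuple es')
  | proj (i : ℕ) {a a' : Exp} : Sim e₁ e₂ a a' → Sim e₁ e₂ (.proj i a) (.proj i a')

namespace Sim

variable {e₁ e₂ : Exp}

mutual
theorem refl : ∀ C : Exp, Sim e₁ e₂ C C
  | .var n => .var n
  | .unit => .unit
  | .int n => .int n
  | .prim p a b => .prim p (refl a) (refl b)
  | .if0 c a b => .if0 (refl c) (refl a) (refl b)
  | .lam τ b => .lam τ (refl b)
  | .app a b => .app (refl a) (refl b)
  | .fold τ a => .fold τ (refl a)
  | .unfold a => .unfold (refl a)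
  | .tuple es => .tuple (forall₂_refl es)
  | .proj i a => .proj i (refl a)
theorem forall₂_refl : ∀ Cs : List Exp, List.Forall₂ (Sim e₁ e₂) Cs Cs
  | [] => .nil
  | C :: Cs => .cons (refl C) (forall₂_refl Cs)
end

mutual
theorem subst (h : IntApprox e₁ e₂) {v w : Exp} (hvw : Sim e₁ e₂ v w) :
    ∀ {a b : Exp} (k : ℕ), Sim e₁ e₂ a b → Sim e₁ e₂ (FunTAL.subst v k a) (FunTAL.subst w k b)
  | _, _, k, .base hp => by
    rw [(h.hasType_left.steps hp).subst_eq_self v (Nat.zero_le k),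
      h.hasType_right.subst_eq_self w (Nat.zero_le k)]
    exact .base hp
  | _, _, k, .var n => by
    simp only [FunTAL.subst]
    split_ifs
    exacts [hvw, .var _, .var _]
  | _, _, _, .unit => .unit
  | _, _, _, .int n => .int n
  | _, _, k, .prim p ha hb => .prim p (subst h hvw k ha) (subst h hvw k hb)
  | _, _, k, .if0 hc ha hb => .if0 (subst h hvw k hc) (subst h hvw k ha) (subst h hvw k hb)
  | _, _, k, .lam τ hb => .lam τ (subst h hvw (k + 1) hb)
  | _, _, k, .app ha hb => .app (subst h hvw k ha) (subst h hvw k hb)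
  | _, _, k, .fold τ ha => .fold τ (subst h hvw k ha)
  | _, _, k, .unfold ha => .unfold (subst h hvw k ha)
  | _, _, k, .tuple hs => .tuple (forall₂_substList h hvw k hs)
  | _, _, k, .proj i ha => .proj i (subst h hvw k ha)
theorem forall₂_substList (h : IntApprox e₁ e₂) {v w : Exp} (hvw : Sim e₁ e₂ v w) :
    ∀ {as bs : List Exp} (k : ℕ), List.Forall₂ (Sim e₁ e₂) as bs →
      List.Forall₂ (Sim e₁ e₂) (substList v k as) (substList w k bs)
  | _, _, _, .nil => .nil
  | _, _, k, .cons ha hs => .cons (subst h hvw k ha) (forall₂_substList h hvw k hs)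
end

theorem steps_int (h : IntApprox e₁ e₂) {n : ℤ} {c : Exp} :
    Sim e₁ e₂ (.int n) c → Steps c (.int n)
  | .base hp => h.steps_int hp
  | .int _ => .refl

theorem exists_value (h : IntApprox e₁ e₂) {v : Exp} (hv : Value v) :
    ∀ {c : Exp}, Sim e₁ e₂ v c → ∃ w, Evaluates c w ∧ Sim e₁ e₂ v w := by
  induction hv with
  | int n => exact fun hc => ⟨.int n, ⟨hc.steps_int h, .int n⟩, .int n⟩
  | unit =>
    intro _ hc
    cases hc with
    | base hp => cases h.hasType_left.steps hp
    | unit => exact ⟨.unit, ⟨.refl, .unit⟩, .unit⟩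
  | lam τ b =>
    intro _ hc
    cases hc with
    | base hp => cases h.hasType_left.steps hp
    | lam _ hb => exact ⟨_, ⟨.refl, .lam _ _⟩, .lam τ hb⟩
  | fold τ v _ ih =>
    intro _ hc
    cases hc with
    | base hp => cases h.hasType_left.steps hp
    | fold _ ha =>
      obtain ⟨w, ⟨hs, hw⟩, hvw⟩ := ih ha
      exact ⟨.fold τ w, ⟨hs.plug (.foldC τ .hole), .fold τ w hw⟩, .fold τ hvw⟩
  | tuple vs _ ih =>
    intro _ hc
    cases hc with
    | base hp => cases h.hasType_left.steps hp
    | tuple hs =>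
      obtain ⟨ws, hev, hsim⟩ := hs.exists_forall₂_forall₂ fun v hv _ hc => ih v hv hc
      refine ⟨.tuple ws, ⟨?_, .tuple ws (forall_value_of_forall₂_evaluates hev)⟩, .tuple hsim⟩
      simpa using steps_tuple_of_forall₂ hev (pre := []) (by simp) []

theorem exists_values (h : IntApprox e₁ e₂) {vs cs : List Exp} (hvs : ∀ v ∈ vs, Value v)
    (hs : List.Forall₂ (Sim e₁ e₂) vs cs) :
    ∃ ws, List.Forall₂ Evaluates cs ws ∧ List.Forall₂ (Sim e₁ e₂) vs ws :=
  hs.exists_forall₂_forall₂ fun v hv _ hc => exists_value h (hvs v hv) hc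

theorem exists_steps_beta (h : IntApprox e₁ e₂) {τ : Ty} {body v c d : Exp} (hv : Value v)
    (hf : Sim e₁ e₂ (.lam τ body) c) (ha : Sim e₁ e₂ v d) :
    ∃ b', Steps (.app c d) b' ∧ Sim e₁ e₂ (FunTAL.subst v 0 body) b' := by
  cases hf with
  | base hp => cases h.hasType_left.steps hp
  | lam _ hbody =>
    obtain ⟨w, ⟨hs, hw⟩, hvw⟩ := exists_value h hv ha
    exact ⟨_, (hs.plug (.app2 _ (.lam _ _) .hole)).tail (HeadStep.beta τ _ w hw).step,
      subst h hvw 0 hbody⟩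

theorem exists_steps_unfold_fold (h : IntApprox e₁ e₂) {τ : Ty} {v c : Exp} (hv : Value v)
    (ha : Sim e₁ e₂ (.fold τ v) c) : ∃ b', Steps (.unfold c) b' ∧ Sim e₁ e₂ v b' := by
  cases ha with
  | base hp => cases h.hasType_left.steps hp
  | fold _ ha =>
    obtain ⟨w, ⟨hs, hw⟩, hvw⟩ := exists_value h hv ha
    exact ⟨w, (hs.plug (.unfoldC (.foldC τ .hole))).tail (HeadStep.unfold_fold τ w hw).step, hvw⟩

theorem exists_steps_proj (h : IntApprox e₁ e₂) {i : ℕ} {vs : List Exp} {v c : Exp}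
    (hvs : ∀ v ∈ vs, Value v) (hi : vs[i]? = some v) (ha : Sim e₁ e₂ (.tuple vs) c) :
    ∃ b', Steps (.proj i c) b' ∧ Sim e₁ e₂ v b' := by
  cases ha with
  | base hp => cases h.hasType_left.steps hp
  | @tuple _ cs hs =>
    obtain ⟨ws, hev, hsim⟩ := exists_values h hvs hs
    obtain ⟨w, hw, hvw⟩ := hsim.exists_of_getElem? hi
    have s : Steps (.tuple cs) (.tuple ws) := by
      simpa using steps_tuple_of_forall₂ hev (pre := []) (by simp) []
    exact ⟨w, (s.plug (.projC i .hole)).tail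
      (HeadStep.proj ws i w (forall_value_of_forall₂_evaluates hev) hw).step, hvw⟩

end Sim

def Simulates (e₁ e₂ a a' : Exp) : Prop :=
  ∀ ⦃b⦄, Sim e₁ e₂ a b → ∃ b', Steps b b' ∧ Sim e₁ e₂ a' b'

namespace Simulates

variable {e₁ e₂ : Exp}

theorem of_headStep (h : IntApprox e₁ e₂) {r r' : Exp} (hr : HeadStep r r') :
    Simulates e₁ e₂ r r' := by
  intro _ hb
  cases hb with
  | base hp => exact ⟨e₂, .refl, .base (hp.tail hr.step)⟩
  | var | unit | int | lam | fold | tuple => cases hr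
  | @prim p _ _ _ c₂ h₁ h₂ =>
    cases hr with
    | prim _ n₁ n₂ =>
      have s₁ := (h₁.steps_int h).plug (.prim1 p .hole c₂)
      have s₂ := (h₂.steps_int h).plug (.prim2 p (.int n₁) (.int n₁) .hole)
      exact ⟨_, (s₁.trans s₂).tail (HeadStep.prim p n₁ n₂).step, .int _⟩
  | @if0 _ _ _ a' _ b' hc ha hb =>
    cases hr with
    | if0_true =>
      have s := (hc.steps_int h).plug (.if0C .hole a' b')
      exact ⟨a', s.tail (HeadStep.if0_true a' b').step, ha⟩
    | if0_false n _ _ hn =>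
      have s := (hc.steps_int h).plug (.if0C .hole a' b')
      exact ⟨b', s.tail (HeadStep.if0_false n a' b' hn).step, hb⟩
  | app hf ha => cases hr with | beta _ _ _ hv => exact Sim.exists_steps_beta h hv hf ha
  | unfold ha => cases hr with | unfold_fold _ _ hv => exact Sim.exists_steps_unfold_fold h hv ha
  | proj i ha => cases hr with | proj _ _ _ hvs hi => exact Sim.exists_steps_proj h hvs hi ha

theorem prim_right (h : IntApprox e₁ e₂) {p : Prim} {v a a' : Exp} (hv : Value v)
    (hs : Step a a') (ha : Simulates e₁ e₂ a a') :
    Simulates e₁ e₂ (.prim p v a) (.prim p v a') := by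
  intro _ hb
  cases hb with
  | base hp => exact ⟨e₂, .refl, .base (hp.tail (hs.plug (.prim2 p v hv .hole)))⟩
  | @prim _ _ c _ d hvc had =>
    obtain ⟨w, ⟨hc, hw⟩, hvw⟩ := Sim.exists_value h hv hvc
    obtain ⟨d', hd, had'⟩ := ha had
    exact ⟨_, (hc.plug (.prim1 p .hole d)).trans (hd.plug (.prim2 p w hw .hole)), .prim p hvw had'⟩

theorem app_right (h : IntApprox e₁ e₂) {v a a' : Exp} (hv : Value v)
    (hs : Step a a') (ha : Simulates e₁ e₂ a a') :
    Simulates e₁ e₂ (.app v a) (.app v a') := by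
  intro _ hb
  cases hb with
  | base hp => exact ⟨e₂, .refl, .base (hp.tail (hs.plug (.app2 v hv .hole)))⟩
  | @app _ c _ d hvc had =>
    obtain ⟨w, ⟨hc, hw⟩, hvw⟩ := Sim.exists_value h hv hvc
    obtain ⟨d', hd, had'⟩ := ha had
    exact ⟨_, (hc.plug (.app1 .hole d)).trans (hd.plug (.app2 w hw .hole)), .app hvw had'⟩

theorem tuple_mid (h : IntApprox e₁ e₂) {vs es : List Exp} {a a' : Exp}
    (hvs : ∀ v ∈ vs, Value v) (hs : Step a a') (ha : Simulates e₁ e₂ a a') :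
    Simulates e₁ e₂ (.tuple (vs ++ a :: es)) (.tuple (vs ++ a' :: es)) := by
  intro _ hb
  cases hb with
  | base hp => exact ⟨e₂, .refl, .base (hp.tail (hs.plug (.tupleC vs hvs .hole es)))⟩
  | tuple hsl =>
    obtain ⟨cs, d, ds, rfl, hvcs, had, hes⟩ := hsl.exists_of_append_cons
    obtain ⟨ws, hev, hvws⟩ := Sim.exists_values h hvs hvcs
    obtain ⟨d', hd, had'⟩ := ha had
    have hcs : Steps (.tuple (cs ++ d :: ds)) (.tuple (ws ++ d :: ds)) := by
      simpa using steps_tuple_of_forall₂ hev (pre := []) (by simp) (d :: ds)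
    exact ⟨_, hcs.trans (hd.plug (.tupleC ws (forall_value_of_forall₂_evaluates hev) .hole ds)),
      .tuple (List.rel_append hvws (.cons had' hes))⟩

theorem of_step (h : IntApprox e₁ e₂) {a a' : Exp} (hs : Step a a') : Simulates e₁ e₂ a a' := by
  obtain ⟨E, r, r', hr⟩ := hs
  induction E with
  | hole => exact of_headStep h hr
  | prim2 p v hv E ih => exact prim_right h hv (.mk E r r' hr) ih
  | app2 v hv E ih => exact app_right h hv (.mk E r r' hr) ih
  | tupleC vs hvs E es ih => exact tuple_mid h hvs (.mk E r r' hr) ih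
  | prim1 p E x ih => exact fun _ hb => match hb with
    | .base hp => ⟨e₂, .refl, .base (hp.tail (.mk _ r r' hr))⟩
    | .prim _ hc hd => let ⟨_, hc', hs⟩ := ih hc; ⟨_, hc'.plug (.prim1 p .hole _), .prim p hs hd⟩
  | if0C E x y ih => exact fun _ hb => match hb with
    | .base hp => ⟨e₂, .refl, .base (hp.tail (.mk _ r r' hr))⟩
    | .if0 hc hx hy => let ⟨_, hc', hs⟩ := ih hc; ⟨_, hc'.plug (.if0C .hole _ _), .if0 hs hx hy⟩
  | app1 E x ih => exact fun _ hb => match hb with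
    | .base hp => ⟨e₂, .refl, .base (hp.tail (.mk _ r r' hr))⟩
    | .app hc hd => let ⟨_, hc', hs⟩ := ih hc; ⟨_, hc'.plug (.app1 .hole _), .app hs hd⟩
  | foldC τ E ih => exact fun _ hb => match hb with
    | .base hp => ⟨e₂, .refl, .base (hp.tail (.mk _ r r' hr))⟩
    | .fold _ hc => let ⟨_, hc', hs⟩ := ih hc; ⟨_, hc'.plug (.foldC τ .hole), .fold τ hs⟩
  | unfoldC E ih => exact fun _ hb => match hb with
    | .base hp => ⟨e₂, .refl, .base (hp.tail (.mk _ r r' hr))⟩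
    | .unfold hc => let ⟨_, hc', hs⟩ := ih hc; ⟨_, hc'.plug (.unfoldC .hole), .unfold hs⟩
  | projC i E ih => exact fun _ hb => match hb with
    | .base hp => ⟨e₂, .refl, .base (hp.tail (.mk _ r r' hr))⟩
    | .proj _ hc => let ⟨_, hc', hs⟩ := ih hc; ⟨_, hc'.plug (.projC i .hole), .proj i hs⟩

end Simulates

theorem Sim.exists_evaluates {e₁ e₂ : Exp} (h : IntApprox e₁ e₂) {a v b : Exp}
    (hav : Evaluates a v) (hab : Sim e₁ e₂ a b) : ∃ w, Evaluates b w := by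
  obtain ⟨hs, hv⟩ := hav
  induction hs using Relation.ReflTransGen.head_induction_on generalizing b with
  | refl =>
    obtain ⟨w, hw, _⟩ := exists_value h hv hab
    exact ⟨w, hw⟩
  | head hstep _ ih =>
    obtain ⟨b', hb, hab'⟩ := Simulates.of_step h hstep hab
    obtain ⟨w, hw, hwv⟩ := ih hab'
    exact ⟨w, hb.trans hw, hwv⟩

theorem IntApprox.exists_evaluates_subst {e₁ e₂ : Exp} (h : IntApprox e₁ e₂) (C : Exp) (k : ℕ) :
    (∃ v, Evaluates (subst e₁ k C) v) → ∃ v, Evaluates (subst e₂ k C) v :=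
  fun ⟨_, hv⟩ => Sim.exists_evaluates h hv (Sim.subst h (.base .refl) k (.refl C))

/-- **Soundness of the logical relation for termination-observation
equivalence**: if two closed terms of type `int` are related by the
step-indexed logical relation at all step indices (in both directions),
then plugging them into any well-typed closing context (represented as a
term with one free variable of type `int`) yields programs that
co-terminate; hence logical relatedness implies contextual equivalence. -/
theorem lr_sound_for_ctx_equiv (e1 e2 : Exp)
    (ht1 : HasType [] e1 .int) (ht2 : HasType [] e2 .int)
    (hrel : ∀ k, LRint k e1 e2 ∧ LRint k e2 e1) :
    ∀ (C : Exp) (τ : Ty), HasType [.int] C τ →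
      ((∃ v, Evaluates (subst e1 0 C) v) ↔ (∃ v, Evaluates (subst e2 0 C) v)) := by
  intro C _ _
  exact ⟨(IntApprox.of_lrint ht1 ht2 fun k => (hrel k).1).exists_evaluates_subst C 0,
    (IntApprox.of_lrint ht2 ht1 fun k => (hrel k).2).exists_evaluates_subst C 0⟩

end FunTAL
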